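/- Let h be a complex number with exp(h) ≠ 1 and let [x] = (exp(hx/2) − exp(−hx/2))/(exp(h/2) − exp(−h/2)) for x ∈ ℂ. Let n ≥ 1 and let a₁, …, aₙ, b₁, …, b_{n−1}, c₁, …, c_{n−1} be complex numbers such that for all i ≠ t in {1, …, n} the brackets [a_i − a_t], [a_i − a_t − 1] and [a_i − a_t + 1] are nonzero. Then ∑_{s=0}^{1} ∑_{i=1}^{n} (−1)^s · ( ∏_{t=1}^{n−1} [a_i − b_t − s] · ∏_{t=1}^{n−1} [a_i − c_t − s] ) / ( ∏_{t≠i} [a_i − a_t − s][a_i − a_t − s + 1] ) = 0. (Identity (A26), the common generic form of the identities (24a)–(24d).) -/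

import Mathlib

/-- The q-bracket `[x] = (exp(hx/2) - exp(-hx/2))/(exp(h/2) - exp(-h/2))`. -/
noncomputable def qbr (h x : ℂ) : ℂ :=
  (Complex.exp (h * x / 2) - Complex.exp (-(h * x) / 2)) /
    (Complex.exp (h / 2) - Complex.exp (-h / 2))

/-!
Since `[x - y] = exp (-h (x + y) / 2) (exp (h x) - exp (h y)) / (q - q⁻¹)`, a balanced sum
`∑ j, ∏ m [x j - y m] / ∏ k ≠ j, [x j - x k]` with two fewer numerator than denominator factors
equals, up to a factor independent of `j`, the sum `∑ j, F (X j) / ∏ k ≠ j, (X j - X k)` at the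
points `X j = exp (h x j)`, where `F = ∏ m (X - exp (h y m))`. That sum is the coefficient of
`X ^ (#nodes - 1)` in the Lagrange interpolant of `F`, which is `0` because `F` has smaller degree.
(A26) is such a sum over the `2n` nodes `a i - s`, `s ∈ {0, 1}`: the sign `(-1) ^ s` is the missing
denominator factor `[(a i - s) - (a i - (1 - s))] = [±1] = ±1`.
-/

open Finset Polynomial Lagrange Complex

theorem qbr_sub (h x y : ℂ) :
    qbr h (x - y) = exp (-(h * x) / 2) * exp (-(h * y) / 2) * (exp (h * x) - exp (h * y)) /
      (exp (h / 2) - exp (-h / 2)) := by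
  simp only [qbr, mul_sub, ← Complex.exp_add]
  congr 3 <;> ring

theorem qbr_neg (h x : ℂ) : qbr h (-x) = -qbr h x := by
  unfold qbr
  rw [← neg_div]
  congr 1
  ring_nf

theorem qbr_one {h : ℂ} (hh : exp h ≠ 1) : qbr h 1 = 1 := by
  refine (div_eq_one_iff_eq fun hD => hh ?_).mpr (by rw [mul_one])
  rw [show h = h / 2 - -h / 2 by ring, Complex.exp_sub, sub_eq_zero.mp hD,
    div_self (Complex.exp_ne_zero _)]

theorem prod_qbr_sub {κ : Type*} (M : Finset κ) (h x : ℂ) (y : κ → ℂ) :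
    ∏ m ∈ M, qbr h (x - y m) = (exp (-(h * x) / 2) / (exp (h / 2) - exp (-h / 2))) ^ #M *
      (∏ m ∈ M, exp (-(h * y m) / 2)) * (nodal M fun m => exp (h * y m)).eval (exp (h * x)) := by
  simp only [qbr_sub, eval_nodal, div_eq_mul_inv, prod_mul_distrib, prod_const, mul_pow]
  ring

theorem sum_prod_qbr_div_prod_qbr_eq_zero {ι κ : Type*} [DecidableEq ι] (h : ℂ) (S : Finset ι)
    (x : ι → ℂ) (M : Finset κ) (y : κ → ℂ) (hcard : #M + 2 = #S)
    (hx : ∀ j ∈ S, ∀ k ∈ S, j ≠ k → qbr h (x j - x k) ≠ 0) :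
    ∑ j ∈ S, (∏ m ∈ M, qbr h (x j - y m)) / ∏ k ∈ S.erase j, qbr h (x j - x k) = 0 := by
  have hD : exp (h / 2) - exp (-h / 2) ≠ 0 := by
    obtain ⟨j, hj, k, hk, hjk⟩ := one_lt_card.mp (by omega : 1 < #S)
    intro hD
    exact hx j hj k hk hjk (by rw [qbr_sub, hD, div_zero])
  have hinj : Set.InjOn (fun j => exp (h * x j)) S := by
    intro j hj k hk hjk
    by_contra hne
    exact hx j hj k hk hne (by rw [qbr_sub, show exp (h * x j) = exp (h * x k) from hjk,
      sub_self, mul_zero, zero_div])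
  have hterm : ∀ j ∈ S, (∏ m ∈ M, qbr h (x j - y m)) / ∏ k ∈ S.erase j, qbr h (x j - x k) =
      (exp (h / 2) - exp (-h / 2)) * (∏ m ∈ M, exp (-(h * y m) / 2)) /
          (∏ k ∈ S, exp (-(h * x k) / 2)) *
        ((nodal M fun m => exp (h * y m)).eval (exp (h * x j)) /
          ∏ k ∈ S.erase j, (exp (h * x j) - exp (h * x k))) := by
    intro j hj
    rw [prod_qbr_sub, prod_qbr_sub, eval_nodal (s := S.erase j), card_erase_of_mem hj, ← hcard,
      Nat.add_succ_sub_one, pow_succ, ← prod_erase_mul _ _ hj]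
    have hu := Complex.exp_ne_zero (-(h * x j) / 2)
    have hP : ∏ k ∈ S.erase j, exp (-(h * x k) / 2) ≠ 0 :=
      prod_ne_zero_iff.mpr fun _ _ => Complex.exp_ne_zero _
    generalize exp (-(h * x j) / 2) = u at *
    generalize exp (h / 2) - exp (-h / 2) = D at *
    field_simp
  have hdeg : (nodal M fun m => exp (h * y m)).degree < #S := by
    rw [degree_nodal]; exact_mod_cast (by omega : #M < #S)
  rw [sum_congr rfl hterm, ← mul_sum, ← coeff_eq_sum hinj hdeg,
    coeff_eq_zero_of_natDegree_lt (by rw [natDegree_nodal]; omega), mul_zero]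

theorem prod_erase_range_two_product {α M : Type*} [DecidableEq α] [CommMonoid M] {T : Finset α}
    {s : ℕ} {i : α} (hs : s < 2) (hi : i ∈ T) (g : ℕ × α → M) :
    ∏ k ∈ (range 2 ×ˢ T).erase (s, i), g k =
      g (1 - s, i) * ∏ t ∈ T.erase i, g (0, t) * g (1, t) := by
  have hset : (range 2 ×ˢ T).erase (s, i) = insert (1 - s, i) (range 2 ×ˢ T.erase i) := by
    ext ⟨σ, t⟩
    simp only [mem_erase, mem_product, mem_range, mem_insert, Prod.mk.injEq, ne_eq]
    by_cases hti : t = i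
    · subst hti
      simp only [hi, and_true, not_true_eq_false, and_false, or_false]
      omega
    · simp [hti]
  rw [hset, prod_insert (by simp), prod_product, prod_range_succ, prod_range_one,
    ← prod_mul_distrib]

theorem qbr_shift_sub_ne_zero {α : Type*} {h : ℂ} (hh : exp h ≠ 1) {T : Finset α} {a : α → ℂ}
    (hA : ∀ i ∈ T, ∀ t ∈ T, i ≠ t →
      qbr h (a i - a t) ≠ 0 ∧ qbr h (a i - a t - 1) ≠ 0 ∧ qbr h (a i - a t + 1) ≠ 0) :
    ∀ j ∈ range 2 ×ˢ T, ∀ k ∈ range 2 ×ˢ T, j ≠ k →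
      qbr h ((a j.2 - j.1) - (a k.2 - k.1)) ≠ 0 := by
  rintro ⟨s, i⟩ hj ⟨σ, t⟩ hk hne
  obtain ⟨hs, hi⟩ := mem_product.mp hj
  obtain ⟨hσ, ht⟩ := mem_product.mp hk
  rw [mem_range] at hs hσ
  dsimp only
  by_cases hit : i = t
  · subst hit
    have hsσ : s ≠ σ := fun e => hne (by rw [e])
    interval_cases s <;> interval_cases σ <;> simp_all [qbr_one, qbr_neg, sub_sub_cancel_left]
  · obtain ⟨h0, hm, hp⟩ := hA i hi t ht hit
    interval_cases s <;> interval_cases σ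
    · convert h0 using 2; push_cast; ring
    · convert hp using 2; push_cast; ring
    · convert hm using 2; push_cast; ring
    · convert h0 using 2; push_cast; ring

theorem neg_one_pow_mul_div_prod_qbr {α : Type*} [DecidableEq α] {h : ℂ} (hh : exp h ≠ 1)
    {T : Finset α} (a : α → ℂ) (N : ℂ) {s : ℕ} {i : α} (hs : s < 2) (hi : i ∈ T) :
    (-1) ^ s * N / ∏ t ∈ T.erase i, qbr h (a i - a t - s) * qbr h (a i - a t - s + 1) =
      N / ∏ k ∈ (range 2 ×ˢ T).erase (s, i), qbr h ((a i - s) - (a k.2 - k.1)) := by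
  have hpair : qbr h ((a i - s) - (a i - ((1 - s : ℕ) : ℂ))) = (-1) ^ s := by
    interval_cases s <;> norm_num [qbr_one hh, qbr_neg]
  have hrest : ∀ t ∈ T.erase i, qbr h ((a i - s) - (a t - ((0 : ℕ) : ℂ))) *
      qbr h ((a i - s) - (a t - ((1 : ℕ) : ℂ))) =
        qbr h (a i - a t - s) * qbr h (a i - a t - s + 1) := fun t _ => by
    push_cast; ring_nf
  rw [prod_erase_range_two_product hs hi, hpair, prod_congr rfl hrest]
  interval_cases s <;> simp [neg_div, div_neg]

/-- Identity (A26). -/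
theorem identity_A26 (h : ℂ) (hh : Complex.exp h ≠ 1) (n : ℕ) (hn : 1 ≤ n)
    (a b c : ℕ → ℂ)
    (hA : ∀ i ∈ Finset.Icc 1 n, ∀ t ∈ Finset.Icc 1 n, i ≠ t →
      qbr h (a i - a t) ≠ 0 ∧ qbr h (a i - a t - 1) ≠ 0 ∧ qbr h (a i - a t + 1) ≠ 0) :
    ∑ s ∈ Finset.range 2, ∑ i ∈ Finset.Icc 1 n, (-1 : ℂ) ^ s *
      ((∏ t ∈ Finset.Icc 1 (n - 1), qbr h (a i - b t - (s : ℂ))) *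
        ∏ t ∈ Finset.Icc 1 (n - 1), qbr h (a i - c t - (s : ℂ))) /
      ∏ t ∈ (Finset.Icc 1 n).erase i,
        qbr h (a i - a t - (s : ℂ)) * qbr h (a i - a t - (s : ℂ) + 1) = 0 := by
  set M := (Icc 1 (n - 1)).disjSum (Icc 1 (n - 1))
  have hcard : #M + 2 = #(range 2 ×ˢ Icc 1 n) := by
    simp only [M, card_disjSum, card_product, card_range, Nat.card_Icc]
    omega
  set x : ℕ × ℕ → ℂ := fun k => a k.2 - k.1
  rw [← sum_product']
  refine Eq.trans (sum_congr rfl fun j hj => ?_) (sum_prod_qbr_div_prod_qbr_eq_zero h _ x M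
    (Sum.elim b c) hcard (qbr_shift_sub_ne_zero hh hA))
  obtain ⟨hs, hi⟩ := mem_product.mp hj
  rw [neg_one_pow_mul_div_prod_qbr hh a _ (mem_range.mp hs) hi, prod_disjSum]
  simp only [x, Sum.elim_inl, Sum.elim_inr, sub_right_comm _ _ (j.1 : ℂ)]
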